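/- Let p ≥ 2 be an integer, j ∈ {1, …, p−1}, σ ∈ ((p−2)/(p−1), 1), θ > 1, T > 0, h ≥ 1 and M > 0. Let a_p : [0,T] → ℝ satisfy |a_p(t)| ≥ C_{a_p} > 0 for all t; let b : [0,T]×ℝ → ℝ satisfy |b(t,x)| ≤ C_b ⟨x⟩^{−((p−j)/(p−1))σ}; let d, A : [0,T]×ℝ×ℝ → ℝ satisfy |d(t,x,ξ)| ≤ C_d ⟨ξ⟩_h^{p−j} ⟨x⟩^{−((p−j)/(p−1))σ} and |A(t,x,ξ)| ≤ C_A ⟨ξ⟩_h^{p−j−1+1/θ} ⟨x⟩^{−((p−j)/(p−1))σ}. Define ã(t,x,ξ) = −b(t,x) ξ^{p−j} + pM|a_p(t)| |ξ|^{p−1} ⟨ξ⟩_h^{1−j} ⟨x⟩^{−((p−j)/(p−1))σ} + d(t,x,ξ) + A(t,x,ξ). If pM C_{a_p} (2/√5)^{j−1} − C_b − (√5/2)^{p−j} C_d − (√5/2)^{p−j−1+1/θ} C_A h^{−1+1/θ} ≥ 1/2, then ã(t,x,ξ) ≥ (1/2) ⟨x⟩^{−((p−j)/(p−1))σ} |ξ|^{p−j}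 for all t ∈ [0,T], x ∈ ℝ and all ξ with |ξ| ≥ 2h. -/
import Mathlib


open Set

noncomputable def jb (x : ℝ) : ℝ := Real.sqrt (1 + x ^ 2)

noncomputable def jbh (h ξ : ℝ) : ℝ := Real.sqrt (h ^ 2 + ξ ^ 2)

set_option maxHeartbeats 1000000 in
theorem stmt16 (p j : ℕ) (σ θ T h M Cap Cb Cd CA : ℝ)
    (hp : 2 ≤ p) (hj1 : 1 ≤ j) (hj2 : j ≤ p - 1)
    (hσ1 : ((p : ℝ) - 2) / ((p : ℝ) - 1) < σ) (hσ2 : σ < 1)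
    (hθ : 1 < θ) (hT : 0 < T) (hh : 1 ≤ h) (hM : 0 < M) (hCap : 0 < Cap)
    (ap : ℝ → ℝ) (hap : ∀ t ∈ Icc (0 : ℝ) T, Cap ≤ |ap t|)
    (b : ℝ → ℝ → ℝ)
    (hb : ∀ t ∈ Icc (0 : ℝ) T, ∀ x : ℝ,
      |b t x| ≤ Cb * jb x ^ (-(((p : ℝ) - (j : ℝ)) / ((p : ℝ) - 1)) * σ))
    (d A : ℝ → ℝ → ℝ → ℝ)
    (hd : ∀ t ∈ Icc (0 : ℝ) T, ∀ x ξ : ℝ,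
      |d t x ξ| ≤ Cd * jbh h ξ ^ (((p : ℝ) - (j : ℝ))) *
        jb x ^ (-(((p : ℝ) - (j : ℝ)) / ((p : ℝ) - 1)) * σ))
    (hA : ∀ t ∈ Icc (0 : ℝ) T, ∀ x ξ : ℝ,
      |A t x ξ| ≤ CA * jbh h ξ ^ (((p : ℝ) - (j : ℝ) - 1 + 1 / θ)) *
        jb x ^ (-(((p : ℝ) - (j : ℝ)) / ((p : ℝ) - 1)) * σ))
    (hKey : (1 : ℝ) / 2 ≤
      (p : ℝ) * M * Cap * (2 / Real.sqrt 5) ^ (j - 1) - Cb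
        - (Real.sqrt 5 / 2) ^ (p - j) * Cd
        - (Real.sqrt 5 / 2) ^ (((p : ℝ) - (j : ℝ) - 1 + 1 / θ)) * CA * h ^ (-1 + 1 / θ)) :
    ∀ t ∈ Icc (0 : ℝ) T, ∀ x ξ : ℝ, 2 * h ≤ |ξ| →
      (1 / 2 : ℝ) * jb x ^ (-(((p : ℝ) - (j : ℝ)) / ((p : ℝ) - 1)) * σ) * |ξ| ^ (p - j) ≤
        -(b t x) * ξ ^ (p - j)
          + (p : ℝ) * M * |ap t| * |ξ| ^ (p - 1) * jbh h ξ ^ ((1 : ℝ) - (j : ℝ)) *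
              jb x ^ (-(((p : ℝ) - (j : ℝ)) / ((p : ℝ) - 1)) * σ)
          + d t x ξ + A t x ξ := by
  intro t ht x ξ hξ
  have hjp : j ≤ p := hj2.trans (Nat.sub_le p 1)
  have hPJ : ((p - j : ℕ) : ℝ) = (p : ℝ) - (j : ℝ) := by
    rw [Nat.cast_sub hjp]
  have hP1 : ((p - 1 : ℕ) : ℝ) = (p : ℝ) - 1 := by
    rw [Nat.cast_sub (le_trans (by norm_num) hp)]; norm_num
  have hJ1 : ((j - 1 : ℕ) : ℝ) = (j : ℝ) - 1 := by
    rw [Nat.cast_sub hj1]; norm_num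
  have hJP1 : (j : ℝ) ≤ (p : ℝ) - 1 := by
    have h1 := (Nat.le_sub_iff_add_le (le_trans (by norm_num) hp)).1 hj2
    have h2 : (j : ℝ) + 1 ≤ (p : ℝ) := by exact_mod_cast h1
    linarith
  have hJ1' : (1 : ℝ) ≤ (j : ℝ) := by exact_mod_cast hj1
  have hs5 : Real.sqrt 5 ^ 2 = 5 := Real.sq_sqrt (by norm_num)
  have hs5pos : (0 : ℝ) < Real.sqrt 5 := Real.sqrt_pos.2 (by norm_num)
  have hs5gt2 : (2 : ℝ) < Real.sqrt 5 := by nlinarith [hs5, hs5pos]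
  set c : ℝ := Real.sqrt 5 / 2 with hc
  have hc2 : c ^ 2 = 5 / 4 := by rw [hc, div_pow, hs5]; norm_num
  have hc1 : (1 : ℝ) < c := by rw [hc]; linarith
  have hc0 : (0 : ℝ) < c := by linarith
  set X := |ξ| with hXdef
  have hX2 : (2 : ℝ) ≤ X := le_trans (by linarith) hξ
  have hX0 : (0 : ℝ) < X := by linarith
  have hhX : h ≤ X := by linarith
  have hjbpos : (0 : ℝ) < jb x := Real.sqrt_pos.2 (by positivity)
  set r : ℝ := -(((p : ℝ) - (j : ℝ)) / ((p : ℝ) - 1)) * σ with hr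
  set w : ℝ := jb x ^ r with hwdef
  have hw : (0 : ℝ) < w := Real.rpow_pos_of_pos hjbpos r
  set G : ℝ := jbh h ξ with hGdef
  have hG0 : (0 : ℝ) < G := Real.sqrt_pos.2 (by positivity)
  have hGX : X ≤ G := by
    rw [hGdef, jbh, hXdef, ← Real.sqrt_sq_eq_abs]
    exact Real.sqrt_le_sqrt (by nlinarith)
  have hG2 : G ≤ c * X := by
    rw [hGdef, jbh]
    have hx2 : ξ ^ 2 = X ^ 2 := (sq_abs ξ).symm
    have hh2 : h ^ 2 ≤ (X / 2) ^ 2 := by nlinarith [hh, hξ]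
    have h1 : h ^ 2 + ξ ^ 2 ≤ (c * X) ^ 2 := by
      have : (c * X) ^ 2 = 5 / 4 * X ^ 2 := by rw [mul_pow, hc2]
      nlinarith
    calc Real.sqrt (h ^ 2 + ξ ^ 2) ≤ Real.sqrt ((c * X) ^ 2) := Real.sqrt_le_sqrt h1
      _ = c * X := Real.sqrt_sq (by positivity)
  have hXpj : X ^ (p - j) = X ^ ((p : ℝ) - (j : ℝ)) := by
    rw [← hPJ, Real.rpow_natCast]
  have hXp1 : X ^ (p - 1) = X ^ ((p : ℝ) - 1) := by
    rw [← hP1, Real.rpow_natCast]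
  set E : ℝ := X ^ ((p : ℝ) - (j : ℝ)) with hEdef
  have hE0 : (0 : ℝ) < E := Real.rpow_pos_of_pos hX0 _
  have ht0 : (0 : ℝ) ∈ Icc (0 : ℝ) T := ⟨le_refl _, hT.le⟩
  have hCb0 : 0 ≤ Cb := by
    have h1 := (abs_nonneg (b 0 0)).trans (hb 0 ht0 0)
    have h2 : (0 : ℝ) < jb (0:ℝ) ^ r := Real.rpow_pos_of_pos (Real.sqrt_pos.2 (by norm_num)) r
    have h4 : (0 : ℝ) * jb (0:ℝ) ^ r ≤ Cb * jb (0:ℝ) ^ r := by rw [zero_mul]; exact h1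
    exact le_of_mul_le_mul_right h4 h2
  have hCd0 : 0 ≤ Cd := by
    have h1 := (abs_nonneg (d 0 0 0)).trans (hd 0 ht0 0 0)
    have h3 : (0 : ℝ) < jbh h 0 ^ ((p : ℝ) - (j : ℝ)) * jb (0:ℝ) ^ r :=
      mul_pos (Real.rpow_pos_of_pos (Real.sqrt_pos.2 (by positivity)) _)
        (Real.rpow_pos_of_pos (Real.sqrt_pos.2 (by norm_num)) r)
    have h4 : (0 : ℝ) * (jbh h 0 ^ ((p : ℝ) - (j : ℝ)) * jb (0:ℝ) ^ r) ≤
        Cd * (jbh h 0 ^ ((p : ℝ) - (j : ℝ)) * jb (0:ℝ) ^ r) := by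
      rw [zero_mul, ← mul_assoc]; exact h1
    exact le_of_mul_le_mul_right h4 h3
  have hCA0 : 0 ≤ CA := by
    have h1 := (abs_nonneg (A 0 0 0)).trans (hA 0 ht0 0 0)
    have h3 : (0 : ℝ) < jbh h 0 ^ ((p : ℝ) - (j : ℝ) - 1 + 1 / θ) * jb (0:ℝ) ^ r :=
      mul_pos (Real.rpow_pos_of_pos (Real.sqrt_pos.2 (by positivity)) _)
        (Real.rpow_pos_of_pos (Real.sqrt_pos.2 (by norm_num)) r)
    have h4 : (0 : ℝ) * (jbh h 0 ^ ((p : ℝ) - (j : ℝ) - 1 + 1 / θ) * jb (0:ℝ) ^ r) ≤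
        CA * (jbh h 0 ^ ((p : ℝ) - (j : ℝ) - 1 + 1 / θ) * jb (0:ℝ) ^ r) := by
      rw [zero_mul, ← mul_assoc]; exact h1
    exact le_of_mul_le_mul_right h4 h3
  -- Term 1
  have hT1 : -Cb * w * E ≤ -(b t x) * ξ ^ (p - j) := by
    have h1 : |b t x * ξ ^ (p - j)| ≤ Cb * w * E := by
      rw [abs_mul, abs_pow, ← hXdef, hXpj]
      exact mul_le_mul_of_nonneg_right (hb t ht x) hE0.le
    calc -Cb * w * E = -(Cb * w * E) := by ring
      _ ≤ -|b t x * ξ ^ (p - j)| := neg_le_neg h1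
      _ ≤ -(b t x * ξ ^ (p - j)) := neg_le_neg (le_abs_self _)
      _ = -(b t x) * ξ ^ (p - j) := by ring
  -- Term 2
  have hT2 : (p : ℝ) * M * Cap * (2 / Real.sqrt 5) ^ (j - 1) * w * E ≤
      (p : ℝ) * M * |ap t| * X ^ (p - 1) * G ^ ((1 : ℝ) - (j : ℝ)) * w := by
    have hconv : ((2 : ℝ) / Real.sqrt 5) ^ (j - 1) = c ^ ((1 : ℝ) - (j : ℝ)) := by
      have h2c : ((2 : ℝ) / Real.sqrt 5) = c⁻¹ := by
        rw [hc]; field_simp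
      rw [h2c, inv_pow, ← Real.rpow_natCast c (j - 1), hJ1, ← Real.rpow_neg hc0.le, neg_sub]
    have hGexp : c ^ ((1 : ℝ) - (j : ℝ)) * X ^ ((1 : ℝ) - (j : ℝ)) ≤ G ^ ((1 : ℝ) - (j : ℝ)) := by
      have h1 : (c * X) ^ ((1 : ℝ) - (j : ℝ)) ≤ G ^ ((1 : ℝ) - (j : ℝ)) := by
        apply Real.rpow_le_rpow_of_nonpos hG0 hG2 (by linarith)
      rwa [Real.mul_rpow hc0.le hX0.le] at h1
    have hXsplit : X ^ ((p : ℝ) - 1) * X ^ ((1 : ℝ) - (j : ℝ)) = E := by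
      rw [hEdef, ← Real.rpow_add hX0]
      congr 1; ring
    have hapb : Cap ≤ |ap t| := hap t ht
    have hp0 : (0 : ℝ) < (p : ℝ) := by positivity
    have step : c ^ ((1 : ℝ) - (j : ℝ)) * E ≤ X ^ ((p : ℝ) - 1) * G ^ ((1 : ℝ) - (j : ℝ)) := by
      have hXm : (0 : ℝ) < X ^ ((p : ℝ) - 1) := Real.rpow_pos_of_pos hX0 _
      calc c ^ ((1 : ℝ) - (j : ℝ)) * E
          = X ^ ((p : ℝ) - 1) * (c ^ ((1 : ℝ) - (j : ℝ)) * X ^ ((1 : ℝ) - (j : ℝ))) := by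
            rw [← hXsplit]; ring
        _ ≤ X ^ ((p : ℝ) - 1) * G ^ ((1 : ℝ) - (j : ℝ)) :=
            mul_le_mul_of_nonneg_left hGexp hXm.le
    have hcE : 0 ≤ c ^ ((1 : ℝ) - (j : ℝ)) * E :=
      mul_nonneg (Real.rpow_nonneg hc0.le _) hE0.le
    have key : Cap * (c ^ ((1 : ℝ) - (j : ℝ)) * E) ≤
        |ap t| * (X ^ ((p : ℝ) - 1) * G ^ ((1 : ℝ) - (j : ℝ))) :=
      calc Cap * (c ^ ((1 : ℝ) - (j : ℝ)) * E) ≤ |ap t| * (c ^ ((1 : ℝ) - (j : ℝ)) * E) :=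
            mul_le_mul_of_nonneg_right hapb hcE
        _ ≤ |ap t| * (X ^ ((p : ℝ) - 1) * G ^ ((1 : ℝ) - (j : ℝ))) :=
            mul_le_mul_of_nonneg_left step (abs_nonneg _)
    rw [hXp1, hconv]
    have hfin := mul_le_mul_of_nonneg_left key
      (mul_nonneg (mul_nonneg hp0.le hM.le) hw.le)
    calc (p : ℝ) * M * Cap * c ^ ((1 : ℝ) - (j : ℝ)) * w * E
        = (p : ℝ) * M * w * (Cap * (c ^ ((1 : ℝ) - (j : ℝ)) * E)) := by ring
      _ ≤ (p : ℝ) * M * w * (|ap t| * (X ^ ((p : ℝ) - 1) * G ^ ((1 : ℝ) - (j : ℝ)))) := hfin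
      _ = (p : ℝ) * M * |ap t| * X ^ ((p : ℝ) - 1) * G ^ ((1 : ℝ) - (j : ℝ)) * w := by ring
  -- Term 3
  have hT3 : -((c ^ (p - j) * Cd) * w * E) ≤ d t x ξ := by
    have hGle : G ^ ((p : ℝ) - (j : ℝ)) ≤ (c ^ (p - j)) * E := by
      have h1 : G ^ ((p : ℝ) - (j : ℝ)) ≤ (c * X) ^ ((p : ℝ) - (j : ℝ)) :=
        Real.rpow_le_rpow hG0.le hG2 (by linarith)
      have h2 : (c * X) ^ ((p : ℝ) - (j : ℝ)) = c ^ ((p : ℝ) - (j : ℝ)) * E := by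
        rw [Real.mul_rpow hc0.le hX0.le, hEdef]
      have h4 : c ^ ((p : ℝ) - (j : ℝ)) = c ^ (p - j) := by
        rw [← hPJ, Real.rpow_natCast]
      rw [h2, h4] at h1
      exact h1
    have h3 : |d t x ξ| ≤ (c ^ (p - j) * Cd) * w * E := by
      calc |d t x ξ| ≤ Cd * G ^ ((p : ℝ) - (j : ℝ)) * w := hd t ht x ξ
        _ ≤ Cd * ((c ^ (p - j)) * E) * w :=
            mul_le_mul_of_nonneg_right (mul_le_mul_of_nonneg_left hGle hCd0) hw.le
        _ = (c ^ (p - j) * Cd) * w * E := by ring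
    calc -((c ^ (p - j) * Cd) * w * E) ≤ -|d t x ξ| := neg_le_neg h3
      _ ≤ d t x ξ := neg_abs_le _
  -- Term 4
  have hT4 : -((c ^ ((p : ℝ) - (j : ℝ) - 1 + 1 / θ) * CA * h ^ (-1 + 1 / θ : ℝ)) * w * E) ≤
      A t x ξ := by
    set q : ℝ := (p : ℝ) - (j : ℝ) - 1 + 1 / θ with hq
    have hq0 : 0 ≤ q := by
      have hθ0 : (0 : ℝ) < 1 / θ := by positivity
      rw [hq]; linarith
    have hGle : G ^ q ≤ c ^ q * X ^ q := by
      have h1 : G ^ q ≤ (c * X) ^ q := Real.rpow_le_rpow hG0.le hG2 hq0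
      rwa [Real.mul_rpow hc0.le hX0.le] at h1
    have hXq : X ^ q = E * X ^ (-1 + 1 / θ : ℝ) := by
      rw [hEdef, ← Real.rpow_add hX0]
      congr 1; rw [hq]; ring
    have hXh : X ^ (-1 + 1 / θ : ℝ) ≤ h ^ (-1 + 1 / θ : ℝ) := by
      apply Real.rpow_le_rpow_of_nonpos (by linarith) hhX
      have h1θ : 1 / θ < 1 := by
        rw [div_lt_one (by linarith)]; linarith
      linarith
    have hEq : G ^ q ≤ c ^ q * (E * h ^ (-1 + 1 / θ : ℝ)) := by
      have hcq : (0 : ℝ) ≤ c ^ q := Real.rpow_nonneg hc0.le _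
      calc G ^ q ≤ c ^ q * X ^ q := hGle
        _ = c ^ q * (E * X ^ (-1 + 1 / θ : ℝ)) := by rw [hXq]
        _ ≤ c ^ q * (E * h ^ (-1 + 1 / θ : ℝ)) :=
            mul_le_mul_of_nonneg_left (mul_le_mul_of_nonneg_left hXh hE0.le) hcq
    have h3 : |A t x ξ| ≤ (c ^ q * CA * h ^ (-1 + 1 / θ : ℝ)) * w * E := by
      calc |A t x ξ| ≤ CA * G ^ q * w := hA t ht x ξ
        _ ≤ CA * (c ^ q * (E * h ^ (-1 + 1 / θ : ℝ))) * w :=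
            mul_le_mul_of_nonneg_right (mul_le_mul_of_nonneg_left hEq hCA0) hw.le
        _ = (c ^ q * CA * h ^ (-1 + 1 / θ : ℝ)) * w * E := by ring
    calc -((c ^ q * CA * h ^ (-1 + 1 / θ : ℝ)) * w * E) ≤ -|A t x ξ| := neg_le_neg h3
      _ ≤ A t x ξ := neg_abs_le _
  -- combine
  have hwE : (0 : ℝ) < w * E := mul_pos hw hE0
  have hKey' := mul_le_mul_of_nonneg_right hKey hwE.le
  have hgoal : (1 / 2 : ℝ) * w * E ≤
      -(b t x) * ξ ^ (p - j)
        + (p : ℝ) * M * |ap t| * X ^ (p - 1) * G ^ ((1 : ℝ) - (j : ℝ)) * w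
        + d t x ξ + A t x ξ := by
    have hKey2 : (1 / 2 : ℝ) * w * E ≤
        (p : ℝ) * M * Cap * (2 / Real.sqrt 5) ^ (j - 1) * w * E - Cb * w * E
          - (c ^ (p - j) * Cd) * w * E
          - (c ^ ((p : ℝ) - (j : ℝ) - 1 + 1 / θ) * CA * h ^ (-1 + 1 / θ : ℝ)) * w * E := by
      calc (1 / 2 : ℝ) * w * E = (1 / 2 : ℝ) * (w * E) := by ring
        _ ≤ ((p : ℝ) * M * Cap * (2 / Real.sqrt 5) ^ (j - 1) - Cb - c ^ (p - j) * Cd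
            - c ^ ((p : ℝ) - (j : ℝ) - 1 + 1 / θ) * CA * h ^ (-1 + 1 / θ : ℝ)) * (w * E) :=
            hKey'
        _ = _ := by ring
    calc (1 / 2 : ℝ) * w * E
        ≤ (p : ℝ) * M * Cap * (2 / Real.sqrt 5) ^ (j - 1) * w * E - Cb * w * E
            - (c ^ (p - j) * Cd) * w * E
            - (c ^ ((p : ℝ) - (j : ℝ) - 1 + 1 / θ) * CA * h ^ (-1 + 1 / θ : ℝ)) * w * E :=
          hKey2
      _ = -Cb * w * E + (p : ℝ) * M * Cap * (2 / Real.sqrt 5) ^ (j - 1) * w * E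
            + -((c ^ (p - j) * Cd) * w * E)
            + -((c ^ ((p : ℝ) - (j : ℝ) - 1 + 1 / θ) * CA * h ^ (-1 + 1 / θ : ℝ)) * w * E) := by
          ring
      _ ≤ -(b t x) * ξ ^ (p - j)
            + (p : ℝ) * M * |ap t| * X ^ (p - 1) * G ^ ((1 : ℝ) - (j : ℝ)) * w
            + d t x ξ + A t x ξ :=
          add_le_add (add_le_add (add_le_add hT1 hT2) hT3) hT4
  calc (1 / 2 : ℝ) * w * X ^ (p - j) = (1 / 2 : ℝ) * w * E := by rw [hXpj]
    _ ≤ _ := hgoal
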